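/- (Example 2.5.20) Regard ℤ as a group vector space over the group ℤ with action n • x = n·x (in the paper this space appears as the diagonal quadruples {(a,a,a,a) : a ∈ ℤ}). The subset W = {x : ℤ | x is not a unit} is a group vector subspace (n·x ∈ W whenever x ∈ W and n ∈ ℤ), the full space ℤ is generated by the single element 1 (every x equals x·1), yet every subset T ⊆ W which generates W — i.e. such that each x ∈ W equals n·t for some n ∈ ℤ and t ∈ T — is infinite. Hence a one-dimensional group vector space possesses a proper group vector subspace of infinite dimension. -/

import Mathlib

/-! Every prime `p` is a non-unit, so `p = n * t` with `t ∈ T`; as `t` is not a unit,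
irreducibility of `p` forces `n` to be a unit, i.e. `t = ±p`. Hence `|·|` maps `T` onto a
superset of the infinitely many primes. -/

theorem exists_mem_associated_of_irreducible {M : Type*} [CommMonoid M] {T : Set M}
    (hT : ∀ t ∈ T, ¬IsUnit t) (hgen : ∀ x, ¬IsUnit x → ∃ n, ∃ t ∈ T, x = n * t) {p : M}
    (hp : Irreducible p) : ∃ t ∈ T, Associated t p := by
  obtain ⟨n, t, htT, rfl⟩ := hgen p hp.not_isUnit
  have hn : IsUnit n := (hp.isUnit_or_isUnit rfl).resolve_right (hT t htT)
  exact ⟨t, htT, (associated_unit_mul_left t n hn).symm⟩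

theorem Int.setOf_prime_subset_natAbs_image {T : Set ℤ} (hT : ∀ t ∈ T, ¬IsUnit t)
    (hgen : ∀ x, ¬IsUnit x → ∃ n, ∃ t ∈ T, x = n * t) :
    {p : ℕ | p.Prime} ⊆ Int.natAbs '' T := by
  intro p hp
  obtain ⟨t, htT, htp⟩ :=
    exists_mem_associated_of_irreducible hT hgen (Nat.prime_iff_prime_int.mp hp).irreducible
  exact ⟨t, htT, Int.associated_iff_natAbs.mp htp⟩

theorem Int.infinite_of_forall_not_isUnit_eq_mul {T : Set ℤ} (hT : ∀ t ∈ T, ¬IsUnit t)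
    (hgen : ∀ x, ¬IsUnit x → ∃ n, ∃ t ∈ T, x = n * t) : T.Infinite := fun hfin =>
  Nat.infinite_setOfPred_prime <| (hfin.image _).subset (Int.setOf_prime_subset_natAbs_image hT hgen)

/-- Example 2.5.20: in the group vector space `ℤ` over the group `ℤ` (action by
multiplication), the set `W` of non-units is a group vector subspace, the whole
space is generated by the single element `1`, yet every generating subset of `W`
is infinite. -/
theorem example_2_5_20 :
    (∀ n : ℤ, ∀ x ∈ {x : ℤ | ¬ IsUnit x}, n * x ∈ {x : ℤ | ¬ IsUnit x}) ∧
    (∀ x : ℤ, ∃ n : ℤ, x = n * 1) ∧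
    (∀ T : Set ℤ, T ⊆ {x : ℤ | ¬ IsUnit x} →
      (∀ x ∈ {x : ℤ | ¬ IsUnit x}, ∃ n : ℤ, ∃ t ∈ T, x = n * t) →
      T.Infinite) :=
  ⟨fun _ _ hx hu => hx (isUnit_of_mul_isUnit_right hu), fun x => ⟨x, (mul_one x).symm⟩,
    fun _ hTW hgen => Int.infinite_of_forall_not_isUnit_eq_mul hTW hgen⟩
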